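/- Let (u, φ, ψ, w) be a classical solution of the suspension-bridge Shear beam system in thermoelasticity of type III. Then for every t > 0 the energy E is differentiable and satisfies the dissipation identity dE(t)/dt = −μ ∫₀^L u_t² dx − γ ∫₀^L φ_t² dx − κ ∫₀^L w_{xt}² dx, which is ≤ 0. -/

import Mathlib

open MeasureTheory Set

noncomputable section

/-- Partial derivative with respect to the time variable (second argument). -/
def pdt (f : ℝ → ℝ → ℝ) (x t : ℝ) : ℝ := deriv (fun s => f x s) t

/-- Partial derivative with respect to the space variable (first argument). -/
def pdx (f : ℝ → ℝ → ℝ) (x t : ℝ) : ℝ := deriv (fun y => f y t) x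

/-- A classical solution of the suspension-bridge Shear beam system in
thermoelasticity of type III. -/
structure IsShearSolution (L ρ α lm μ ρ₁ K γ b ρ₃ δ κ β : ℝ)
    (u φ ψ w : ℝ → ℝ → ℝ) : Prop where
  smooth_u : ContDiff ℝ 3 (fun p : ℝ × ℝ => u p.1 p.2)
  smooth_phi : ContDiff ℝ 3 (fun p : ℝ × ℝ => φ p.1 p.2)
  smooth_psi : ContDiff ℝ 3 (fun p : ℝ × ℝ => ψ p.1 p.2)
  smooth_w : ContDiff ℝ 3 (fun p : ℝ × ℝ => w p.1 p.2)
  eq1 : ∀ x ∈ Ioo (0:ℝ) L, ∀ t : ℝ, 0 < t →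
    ρ * pdt (pdt u) x t - α * pdx (pdx u) x t - lm * (φ x t - u x t)
      + μ * pdt u x t = 0
  eq2 : ∀ x ∈ Ioo (0:ℝ) L, ∀ t : ℝ, 0 < t →
    ρ₁ * pdt (pdt φ) x t - K * pdx (fun y s => pdx φ y s + ψ y s) x t
      + lm * (φ x t - u x t) + γ * pdt φ x t + β * pdx (pdt w) x t = 0
  eq3 : ∀ x ∈ Ioo (0:ℝ) L, ∀ t : ℝ, 0 < t →
    -b * pdx (pdx ψ) x t + K * (pdx φ x t + ψ x t) = 0
  eq4 : ∀ x ∈ Ioo (0:ℝ) L, ∀ t : ℝ, 0 < t →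
    ρ₃ * pdt (pdt w) x t - δ * pdx (pdx w) x t + β * pdx (pdt φ) x t
      - κ * pdx (pdx (pdt w)) x t = 0
  bc : ∀ t : ℝ, 0 ≤ t →
    u 0 t = 0 ∧ u L t = 0 ∧ φ 0 t = 0 ∧ φ L t = 0 ∧
    ψ 0 t = 0 ∧ ψ L t = 0 ∧ w 0 t = 0 ∧ w L t = 0

/-- The energy functional of the system. -/
def energy (L ρ α lm ρ₁ K b ρ₃ δ : ℝ) (u φ ψ w : ℝ → ℝ → ℝ) (t : ℝ) : ℝ :=
  (1/2) * ∫ x in (0:ℝ)..L,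
    (ρ * (pdt u x t)^2 + α * (pdx u x t)^2 + lm * (φ x t - u x t)^2
      + ρ₁ * (pdt φ x t)^2 + K * (pdx φ x t + ψ x t)^2 + b * (pdx ψ x t)^2
      + ρ₃ * (pdt w x t)^2 + δ * (pdx w x t)^2)

/-!
Multiplying the four equations by `u_t`, `φ_t`, `ψ_t`, `w_t` and adding them, half the time
derivative of the energy density becomes `-(μ u_t² + γ φ_t² + κ w_xt²)` plus the `x`-derivative
of the flux `α u_x u_t + K (φ_x + ψ) φ_t + b ψ_x ψ_t + δ w_x w_t + κ w_xt w_t - β φ_t w_t`;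
the two coupling terms combine into `β (φ_t w_t)_x`, and the mixed partials commute since the
fields are `C²`. The Dirichlet conditions hold at all times, so the time derivatives, hence the
flux, vanish at `x = 0` and `x = L`. Differentiating the energy under the integral sign and
integrating the flux term away gives the identity.
-/

open Function Topology

section PartialDerivatives

variable {f g : ℝ → ℝ → ℝ} {x t : ℝ}

theorem hasDerivAt_pdt (hf : DifferentiableAt ℝ (uncurry f) (x, t)) :
    HasDerivAt (fun s => f x s) (pdt f x t) t :=
  (hf.comp t ((hasDerivAt_const t x).prodMk (hasDerivAt_id' t)).differentiableAt).hasDerivAt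

theorem hasDerivAt_pdx (hf : DifferentiableAt ℝ (uncurry f) (x, t)) :
    HasDerivAt (fun y => f y t) (pdx f x t) x :=
  (hf.comp (f := fun y => (y, t)) x
    ((hasDerivAt_id' x).prodMk (hasDerivAt_const x t)).differentiableAt).hasDerivAt

theorem pdt_eq_fderiv (hf : DifferentiableAt ℝ (uncurry f) (x, t)) :
    pdt f x t = fderiv ℝ (uncurry f) (x, t) (0, 1) :=
  (hf.hasFDerivAt.comp_hasDerivAt t ((hasDerivAt_const t x).prodMk (hasDerivAt_id' t))).deriv

theorem pdx_eq_fderiv (hf : DifferentiableAt ℝ (uncurry f) (x, t)) :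
    pdx f x t = fderiv ℝ (uncurry f) (x, t) (1, 0) :=
  (hf.hasFDerivAt.comp_hasDerivAt (f := fun y => (y, t)) x
    ((hasDerivAt_id' x).prodMk (hasDerivAt_const x t))).deriv

theorem uncurry_pdt_eq_fderiv (hf : Differentiable ℝ (uncurry f)) :
    uncurry (pdt f) = fun p => fderiv ℝ (uncurry f) p (0, 1) :=
  funext fun p => pdt_eq_fderiv (hf p)

theorem uncurry_pdx_eq_fderiv (hf : Differentiable ℝ (uncurry f)) :
    uncurry (pdx f) = fun p => fderiv ℝ (uncurry f) p (1, 0) :=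
  funext fun p => pdx_eq_fderiv (hf p)

@[fun_prop]
theorem contDiff_pdt {n : WithTop ℕ∞} (hf : ContDiff ℝ (n + 1) (uncurry f)) :
    ContDiff ℝ n (uncurry (pdt f)) := by
  rw [uncurry_pdt_eq_fderiv (hf.differentiable (by simp))]
  exact (hf.fderiv_right le_rfl).clm_apply contDiff_const

@[fun_prop]
theorem contDiff_pdx {n : WithTop ℕ∞} (hf : ContDiff ℝ (n + 1) (uncurry f)) :
    ContDiff ℝ n (uncurry (pdx f)) := by
  rw [uncurry_pdx_eq_fderiv (hf.differentiable (by simp))]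
  exact (hf.fderiv_right le_rfl).clm_apply contDiff_const

theorem pdt_pdx_comm (hf : ContDiff ℝ 2 (uncurry f)) :
    pdt (pdx f) x t = pdx (pdt f) x t := by
  have hd : Differentiable ℝ (uncurry f) := hf.differentiable (by simp)
  have hdd : Differentiable ℝ (fderiv ℝ (uncurry f)) :=
    (hf.fderiv_right (m := 1) le_rfl).differentiable (by simp)
  rw [pdt_eq_fderiv ((contDiff_pdx (n := 1) hf).differentiable (by simp) _),
    pdx_eq_fderiv ((contDiff_pdt (n := 1) hf).differentiable (by simp) _),
    uncurry_pdx_eq_fderiv hd, uncurry_pdt_eq_fderiv hd,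
    fderiv_clm_apply (hdd _) (differentiableAt_const _),
    fderiv_clm_apply (hdd _) (differentiableAt_const _)]
  simpa using (hf.contDiffAt.isSymmSndFDerivAt (by simp)).eq (0, 1) (1, 0)

theorem pdx_add (hf : DifferentiableAt ℝ (uncurry f) (x, t))
    (hg : DifferentiableAt ℝ (uncurry g) (x, t)) :
    pdx (fun y s => f y s + g y s) x t = pdx f x t + pdx g x t :=
  ((hasDerivAt_pdx hf).add (hasDerivAt_pdx hg)).deriv

theorem pdt_eq_zero_of_eventually_eq_zero (h : ∀ᶠ s in 𝓝 t, f x s = 0) : pdt f x t = 0 := by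
  rw [pdt, Filter.EventuallyEq.deriv_eq (f₁ := fun s => f x s) (f := fun _ => 0) h, deriv_const]

end PartialDerivatives

section ParametricIntegrals

variable {G : ℝ → ℝ → ℝ}

theorem hasDerivAt_intervalIntegral_of_contDiff (hG : ContDiff ℝ 1 (uncurry G))
    (a b t : ℝ) :
    HasDerivAt (fun s => ∫ x in a..b, G x s) (∫ x in a..b, pdt G x t) t := by
  have hGt : Continuous (uncurry (pdt G)) := (contDiff_pdt (n := 0) hG).continuous
  obtain ⟨C, hC⟩ :=
    (isCompact_uIcc.prod (isCompact_closedBall t 1)).exists_bound_of_continuousOn hGt.continuousOn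
  refine (intervalIntegral.hasDerivAt_integral_of_dominated_loc_of_deriv_le
    (F' := fun s x => pdt G x s) (bound := fun _ => C) (Metric.ball_mem_nhds t one_pos)
    ?_ ?_ ?_ ?_ intervalIntegrable_const ?_).2
  · exact Filter.Eventually.of_forall fun s =>
      (hG.continuous.comp (continuous_id.prodMk continuous_const)).aestronglyMeasurable
  · exact (hG.continuous.comp (continuous_id.prodMk continuous_const)).intervalIntegrable a b
  · exact (hGt.comp (continuous_id.prodMk continuous_const)).aestronglyMeasurable
  · exact Filter.Eventually.of_forall fun x hx s hs =>
      hC (x, s) ⟨uIoc_subset_uIcc hx, Metric.ball_subset_closedBall hs⟩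
  · exact Filter.Eventually.of_forall fun _ _ _ _ =>
      hasDerivAt_pdt (hG.differentiable one_ne_zero _)

theorem integral_pdx_eq_sub (hG : ContDiff ℝ 1 (uncurry G)) (a b t : ℝ) :
    ∫ x in a..b, pdx G x t = G b t - G a t :=
  intervalIntegral.integral_deriv_eq_sub
    (fun _ _ => (hasDerivAt_pdx (hG.differentiable one_ne_zero _)).differentiableAt)
    (((contDiff_pdx (n := 0) hG).continuous.comp
      (continuous_id.prodMk continuous_const)).intervalIntegrable a b)

end ParametricIntegrals

section ShearSystem

def energyDensity (ρ α lm ρ₁ K b ρ₃ δ : ℝ) (u φ ψ w : ℝ → ℝ → ℝ) (x t : ℝ) : ℝ :=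
  ρ * (pdt u x t)^2 + α * (pdx u x t)^2 + lm * (φ x t - u x t)^2
    + ρ₁ * (pdt φ x t)^2 + K * (pdx φ x t + ψ x t)^2 + b * (pdx ψ x t)^2
    + ρ₃ * (pdt w x t)^2 + δ * (pdx w x t)^2

def powerDensity (ρ α lm ρ₁ K b ρ₃ δ : ℝ) (u φ ψ w : ℝ → ℝ → ℝ) (x t : ℝ) : ℝ :=
  ρ * pdt u x t * pdt (pdt u) x t + α * pdx u x t * pdt (pdx u) x t
    + lm * (φ x t - u x t) * (pdt φ x t - pdt u x t)
    + ρ₁ * pdt φ x t * pdt (pdt φ) x t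
    + K * (pdx φ x t + ψ x t) * (pdt (pdx φ) x t + pdt ψ x t)
    + b * pdx ψ x t * pdt (pdx ψ) x t
    + ρ₃ * pdt w x t * pdt (pdt w) x t + δ * pdx w x t * pdt (pdx w) x t

def energyFlux (α K b δ κ β : ℝ) (u φ ψ w : ℝ → ℝ → ℝ) (x t : ℝ) : ℝ :=
  α * pdx u x t * pdt u x t + K * (pdx φ x t + ψ x t) * pdt φ x t
    + b * pdx ψ x t * pdt ψ x t + δ * pdx w x t * pdt w x t
    + κ * pdx (pdt w) x t * pdt w x t - β * pdt φ x t * pdt w x t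

variable {L ρ α lm μ ρ₁ K γ b ρ₃ δ κ β : ℝ} {u φ ψ w : ℝ → ℝ → ℝ}

theorem IsShearSolution.contDiff_two
    (hsol : IsShearSolution L ρ α lm μ ρ₁ K γ b ρ₃ δ κ β u φ ψ w) :
    ContDiff ℝ 2 (uncurry u) ∧ ContDiff ℝ 2 (uncurry φ) ∧ ContDiff ℝ 2 (uncurry ψ) ∧
      ContDiff ℝ 2 (uncurry w) :=
  ⟨hsol.smooth_u.of_le (by norm_num), hsol.smooth_phi.of_le (by norm_num),
    hsol.smooth_psi.of_le (by norm_num), hsol.smooth_w.of_le (by norm_num)⟩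

theorem contDiff_energyDensity (hu : ContDiff ℝ 2 (uncurry u)) (hφ : ContDiff ℝ 2 (uncurry φ))
    (hψ : ContDiff ℝ 2 (uncurry ψ)) (hw : ContDiff ℝ 2 (uncurry w)) :
    ContDiff ℝ 1 (uncurry (energyDensity ρ α lm ρ₁ K b ρ₃ δ u φ ψ w)) := by
  have := hu.of_le one_le_two
  have := hφ.of_le one_le_two
  have := hψ.of_le one_le_two
  unfold energyDensity
  fun_prop

theorem pdt_energyDensity (hu : ContDiff ℝ 2 (uncurry u)) (hφ : ContDiff ℝ 2 (uncurry φ))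
    (hψ : ContDiff ℝ 2 (uncurry ψ)) (hw : ContDiff ℝ 2 (uncurry w)) (x t : ℝ) :
    pdt (energyDensity ρ α lm ρ₁ K b ρ₃ δ u φ ψ w) x t
      = 2 * powerDensity ρ α lm ρ₁ K b ρ₃ δ u φ ψ w x t := by
  have dt : ∀ {f : ℝ → ℝ → ℝ}, ContDiff ℝ 1 (uncurry f) →
      HasDerivAt (fun s => f x s) (pdt f x t) t :=
    fun hf => hasDerivAt_pdt (hf.differentiable one_ne_zero _)
  have hE : HasDerivAt (fun s => energyDensity ρ α lm ρ₁ K b ρ₃ δ u φ ψ w x s) _ t :=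
    (((((((((dt (contDiff_pdt hu)).fun_pow 2).const_mul ρ).fun_add
      (((dt (contDiff_pdx hu)).fun_pow 2).const_mul α)).fun_add
      ((((dt (hφ.of_le one_le_two)).fun_sub (dt (hu.of_le one_le_two))).fun_pow 2).const_mul
        lm)).fun_add
      (((dt (contDiff_pdt hφ)).fun_pow 2).const_mul ρ₁)).fun_add
      ((((dt (contDiff_pdx hφ)).fun_add (dt (hψ.of_le one_le_two))).fun_pow 2).const_mul
        K)).fun_add
      (((dt (contDiff_pdx hψ)).fun_pow 2).const_mul b)).fun_add
      (((dt (contDiff_pdt hw)).fun_pow 2).const_mul ρ₃)).fun_add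
      (((dt (contDiff_pdx hw)).fun_pow 2).const_mul δ)
  rw [pdt, hE.deriv, powerDensity]
  ring

theorem hasDerivAt_energy (hu : ContDiff ℝ 2 (uncurry u)) (hφ : ContDiff ℝ 2 (uncurry φ))
    (hψ : ContDiff ℝ 2 (uncurry ψ)) (hw : ContDiff ℝ 2 (uncurry w)) (t : ℝ) :
    HasDerivAt (energy L ρ α lm ρ₁ K b ρ₃ δ u φ ψ w)
      (∫ x in (0:ℝ)..L, powerDensity ρ α lm ρ₁ K b ρ₃ δ u φ ψ w x t) t := by
  have hE := hasDerivAt_intervalIntegral_of_contDiff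
    (G := energyDensity ρ α lm ρ₁ K b ρ₃ δ u φ ψ w) (contDiff_energyDensity hu hφ hψ hw) 0 L t
  simp only [pdt_energyDensity hu hφ hψ hw, intervalIntegral.integral_const_mul] at hE
  exact (hE.const_mul (1 / 2 : ℝ)).congr_deriv (by ring)

theorem contDiff_energyFlux (hu : ContDiff ℝ 2 (uncurry u)) (hφ : ContDiff ℝ 2 (uncurry φ))
    (hψ : ContDiff ℝ 2 (uncurry ψ)) (hw : ContDiff ℝ 3 (uncurry w)) :
    ContDiff ℝ 1 (uncurry (energyFlux α K b δ κ β u φ ψ w)) := by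
  have := hψ.of_le one_le_two
  have : ContDiff ℝ 2 (uncurry w) := hw.of_le (by norm_num)
  unfold energyFlux
  fun_prop

theorem energyFlux_eq_zero_of_eventually {c t : ℝ} (hu : ∀ᶠ s in 𝓝 t, u c s = 0)
    (hφ : ∀ᶠ s in 𝓝 t, φ c s = 0) (hψ : ∀ᶠ s in 𝓝 t, ψ c s = 0)
    (hw : ∀ᶠ s in 𝓝 t, w c s = 0) : energyFlux α K b δ κ β u φ ψ w c t = 0 := by
  simp [energyFlux, pdt_eq_zero_of_eventually_eq_zero hu, pdt_eq_zero_of_eventually_eq_zero hφ,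
    pdt_eq_zero_of_eventually_eq_zero hψ, pdt_eq_zero_of_eventually_eq_zero hw]

theorem IsShearSolution.energyFlux_boundary_eq_zero
    (hsol : IsShearSolution L ρ α lm μ ρ₁ K γ b ρ₃ δ κ β u φ ψ w) {t : ℝ} (ht : 0 < t) :
    energyFlux α K b δ κ β u φ ψ w 0 t = 0 ∧ energyFlux α K b δ κ β u φ ψ w L t = 0 := by
  have hbc := Filter.eventually_of_mem (Ioi_mem_nhds ht) fun s (hs : 0 < s) => hsol.bc s hs.le
  simp only [Filter.eventually_and] at hbc
  obtain ⟨u0, uL, φ0, φL, ψ0, ψL, w0, wL⟩ := hbc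
  exact ⟨energyFlux_eq_zero_of_eventually u0 φ0 ψ0 w0,
    energyFlux_eq_zero_of_eventually uL φL ψL wL⟩

theorem IsShearSolution.powerDensity_eq
    (hsol : IsShearSolution L ρ α lm μ ρ₁ K γ b ρ₃ δ κ β u φ ψ w) {x t : ℝ} (hx : x ∈ Ioo 0 L)
    (ht : 0 < t) :
    powerDensity ρ α lm ρ₁ K b ρ₃ δ u φ ψ w x t
      = pdx (energyFlux α K b δ κ β u φ ψ w) x t
        - (μ * (pdt u x t)^2 + γ * (pdt φ x t)^2 + κ * (pdx (pdt w) x t)^2) := by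
  obtain ⟨hu, hφ, hψ, hw⟩ := hsol.contDiff_two
  have dx : ∀ {f : ℝ → ℝ → ℝ}, ContDiff ℝ 1 (uncurry f) →
      HasDerivAt (fun y => f y t) (pdx f x t) x :=
    fun hf => hasDerivAt_pdx (hf.differentiable one_ne_zero _)
  have hF : HasDerivAt (fun y => energyFlux α K b δ κ β u φ ψ w y t) _ x :=
    (((((((dx (contDiff_pdx hu)).const_mul α).fun_mul (dx (contDiff_pdt hu))).fun_add
      ((((dx (contDiff_pdx hφ)).fun_add (dx (hψ.of_le one_le_two))).const_mul K).fun_mul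
        (dx (contDiff_pdt hφ)))).fun_add
      (((dx (contDiff_pdx hψ)).const_mul b).fun_mul (dx (contDiff_pdt hψ)))).fun_add
      (((dx (contDiff_pdx hw)).const_mul δ).fun_mul (dx (contDiff_pdt hw)))).fun_add
      (((dx (contDiff_pdx (contDiff_pdt hsol.smooth_w))).const_mul κ).fun_mul
        (dx (contDiff_pdt hw)))).fun_sub
      (((dx (contDiff_pdt hφ)).const_mul β).fun_mul (dx (contDiff_pdt hw)))
  have eq2 := hsol.eq2 x hx t ht
  rw [pdx_add ((contDiff_pdx hφ).differentiable one_ne_zero _)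
    (hψ.differentiable two_ne_zero _)] at eq2
  rw [pdx, hF.deriv, powerDensity, pdt_pdx_comm hu, pdt_pdx_comm hφ, pdt_pdx_comm hψ,
    pdt_pdx_comm hw]
  linear_combination pdt u x t * hsol.eq1 x hx t ht + pdt φ x t * eq2
    + pdt ψ x t * hsol.eq3 x hx t ht + pdt w x t * hsol.eq4 x hx t ht

theorem IsShearSolution.integral_powerDensity
    (hsol : IsShearSolution L ρ α lm μ ρ₁ K γ b ρ₃ δ κ β u φ ψ w) (hL : 0 ≤ L) {t : ℝ}
    (ht : 0 < t) :
    ∫ x in (0:ℝ)..L, powerDensity ρ α lm ρ₁ K b ρ₃ δ u φ ψ w x t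
      = -(μ * ∫ x in (0:ℝ)..L, (pdt u x t)^2) - γ * (∫ x in (0:ℝ)..L, (pdt φ x t)^2)
        - κ * (∫ x in (0:ℝ)..L, (pdx (pdt w) x t)^2) := by
  obtain ⟨hu, hφ, hψ, hw⟩ := hsol.contDiff_two
  have hF := contDiff_energyFlux (α := α) (K := K) (b := b) (δ := δ) (κ := κ) (β := β)
    hu hφ hψ hsol.smooth_w
  have := (contDiff_pdt (n := 1) hu).continuous
  have := (contDiff_pdt (n := 1) hφ).continuous
  have := (contDiff_pdx (n := 0) (contDiff_pdt (n := 1) hw)).continuous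
  have := (contDiff_pdx (n := 0) hF).continuous
  obtain ⟨hF0, hFL⟩ := hsol.energyFlux_boundary_eq_zero ht
  rw [intervalIntegral.integral_congr_Ioo_of_le hL fun x hx => hsol.powerDensity_eq hx ht,
    intervalIntegral.integral_sub, integral_pdx_eq_sub hF, hF0, hFL,
    intervalIntegral.integral_add, intervalIntegral.integral_add,
    intervalIntegral.integral_const_mul, intervalIntegral.integral_const_mul,
    intervalIntegral.integral_const_mul]
  · ring
  all_goals exact Continuous.intervalIntegrable (by fun_prop) _ _

end ShearSystem

theorem energy_dissipation_identity_general
    {L ρ α lm μ ρ₁ K γ b ρ₃ δ κ β : ℝ}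
    (hL : 0 < L) (hμ : 0 < μ) (hγ : 0 < γ) (hκ : 0 < κ)
    {u φ ψ w : ℝ → ℝ → ℝ}
    (hsol : IsShearSolution L ρ α lm μ ρ₁ K γ b ρ₃ δ κ β u φ ψ w) :
    ∀ t : ℝ, 0 < t →
      HasDerivAt (energy L ρ α lm ρ₁ K b ρ₃ δ u φ ψ w)
        (-(μ * ∫ x in (0:ℝ)..L, (pdt u x t)^2)
          - γ * (∫ x in (0:ℝ)..L, (pdt φ x t)^2)
          - κ * (∫ x in (0:ℝ)..L, (pdx (pdt w) x t)^2)) t ∧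
      (-(μ * ∫ x in (0:ℝ)..L, (pdt u x t)^2)
          - γ * (∫ x in (0:ℝ)..L, (pdt φ x t)^2)
          - κ * (∫ x in (0:ℝ)..L, (pdx (pdt w) x t)^2)) ≤ 0 := by
  intro t ht
  constructor
  · obtain ⟨hu, hφ, hψ, hw⟩ := hsol.contDiff_two
    rw [← hsol.integral_powerDensity hL.le ht]
    exact hasDerivAt_energy hu hφ hψ hw t
  · have hu : 0 ≤ ∫ x in (0:ℝ)..L, (pdt u x t)^2 :=
      intervalIntegral.integral_nonneg hL.le fun _ _ => sq_nonneg _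
    have hφ : 0 ≤ ∫ x in (0:ℝ)..L, (pdt φ x t)^2 :=
      intervalIntegral.integral_nonneg hL.le fun _ _ => sq_nonneg _
    have hw : 0 ≤ ∫ x in (0:ℝ)..L, (pdx (pdt w) x t)^2 :=
      intervalIntegral.integral_nonneg hL.le fun _ _ => sq_nonneg _
    linarith [mul_nonneg hμ.le hu, mul_nonneg hγ.le hφ, mul_nonneg hκ.le hw]

/-- energy dissipation identity. -/
theorem energy_dissipation_identity
    {L ρ α lm μ ρ₁ K γ b ρ₃ δ κ β : ℝ}
    (hL : 0 < L) (hρ : 0 < ρ) (hα : 0 < α) (hlm : 0 < lm) (hμ : 0 < μ)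
    (hρ₁ : 0 < ρ₁) (hK : 0 < K) (hγ : 0 < γ) (hb : 0 < b) (hρ₃ : 0 < ρ₃)
    (hδ : 0 < δ) (hκ : 0 < κ) (hβ : β ≠ 0)
    {u φ ψ w : ℝ → ℝ → ℝ}
    (hsol : IsShearSolution L ρ α lm μ ρ₁ K γ b ρ₃ δ κ β u φ ψ w) :
    ∀ t : ℝ, 0 < t →
      HasDerivAt (energy L ρ α lm ρ₁ K b ρ₃ δ u φ ψ w)
        (-(μ * ∫ x in (0:ℝ)..L, (pdt u x t)^2)
          - γ * (∫ x in (0:ℝ)..L, (pdt φ x t)^2)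
          - κ * (∫ x in (0:ℝ)..L, (pdx (pdt w) x t)^2)) t ∧
      (-(μ * ∫ x in (0:ℝ)..L, (pdt u x t)^2)
          - γ * (∫ x in (0:ℝ)..L, (pdt φ x t)^2)
          - κ * (∫ x in (0:ℝ)..L, (pdx (pdt w) x t)^2)) ≤ 0 :=
  energy_dissipation_identity_general hL hμ hγ hκ hsol
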